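/- arXiv:1206.1975 — 2 statements merged into one kernel-verified Lean document; each statement's English description precedes it below -/
import Mathlib

section
/- Let A and B be n-by-n weighted shift matrices (n ≥ 3) with weights a_1, …, a_n and b_1, …, b_n respectively, and suppose A is unitarily equivalent to B. If a_l·a_{l+1}·⋯·a_m ≠ 0 for some 1 ≤ l ≤ m ≤ n, then there exists a fixed k with 1 ≤ k ≤ n such that |a_j| = |b_{k+j}| for every j with l−1 ≤ j ≤ m+1, where all weight indices are taken cyclically modulo n. -/
open Matrix

/-- The n-by-n weighted shift matrix with weights `a 0, …, a (n-1)`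
(representing `a_1, …, a_n`): the `(i, i+1)` entry is `a i` (cyclically). -/
def wsMatrix {n : ℕ} (a : Fin n → ℂ) : Matrix (Fin n) (Fin n) ℂ :=
  fun i j => if (j : ℕ) = ((i : ℕ) + 1) % n then a i else 0

/-- Two square complex matrices are unitarily equivalent if `B = U* A U`
for some unitary `U`. -/
def UnitarilyEquiv {n : ℕ} (A B : Matrix (Fin n) (Fin n) ℂ) : Prop :=
  ∃ U : Matrix (Fin n) (Fin n) ℂ, U ∈ Matrix.unitaryGroup (Fin n) ℂ ∧ B = Uᴴ * A * U

/-- Cyclic (1-indexed) access to the weights: `wcyc a j` is the weight `a_j`,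
with `a_0 = a_n` and indices taken modulo `n`. -/
def wcyc {n : ℕ} [NeZero n] (a : Fin n → ℂ) (j : ℕ) : ℂ :=
  a ⟨(j + n - 1) % n, Nat.mod_lt _ (Nat.pos_of_ne_zero (NeZero.ne n))⟩

/-!
If `B = U* A U` with `U` unitary, then `U` intertwines `A`, `A*` with `B`, `B*`, hence
`A A* = diag |a_i|²` and `A* A = diag |a_{i-1}|²` with their counterparts for `b`; an intertwining
of diagonal matrices passes to any function of the diagonal entries. Alternating `A` with
indicators of prescribed moduli gives a matrix whose nonzero entries are the products
`a_i ⋯ a_{i+r-1}` over the windows where `|a_{i-1}|, …, |a_{i+r}|` follow the prescribed pattern.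
With the pattern of `a` around `a_l, …, a_m` this matrix is nonzero for `A`, hence for `B`, so the
pattern occurs among the weights of `b`.
-/

open Fin.NatCast Fin.CommRing

theorem Nat.forall_le_add_one_iff {P : ℕ → Prop} {r : ℕ} :
    (∀ s ≤ r + 1, P s) ↔ P 0 ∧ (∀ t < r, P (t + 1)) ∧ P (r + 1) := by
  refine ⟨fun h => ⟨h 0 (Nat.zero_le _), fun t ht => h (t + 1) (by omega), h (r + 1) le_rfl⟩, ?_⟩
  rintro ⟨h0, hmid, hlast⟩ (_ | t) hs
  · exact h0
  · rcases Nat.lt_or_ge t r with ht | ht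
    · exact hmid t ht
    · obtain rfl : t = r := by omega
      exact hlast

theorem Complex.ofReal_norm_sq_eq_iff {z w : ℂ} : (‖z‖ ^ 2 : ℂ) = ‖w‖ ^ 2 ↔ ‖z‖ = ‖w‖ := by
  rw [← Complex.ofReal_pow, ← Complex.ofReal_pow, Complex.ofReal_inj,
    sq_eq_sq₀ (norm_nonneg _) (norm_nonneg _)]

theorem Fin.exists_one_le_le_natCast_eq {n : ℕ} [NeZero n] (c : Fin n) :
    ∃ k : ℕ, 1 ≤ k ∧ k ≤ n ∧ (k : Fin n) = c := by
  by_cases hc : c = 0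
  · exact ⟨n, NeZero.one_le, le_rfl, by rw [Fin.natCast_self, hc]⟩
  · exact ⟨c, Nat.one_le_iff_ne_zero.mpr (Fin.val_ne_zero_iff.mpr hc), c.is_lt.le,
      Fin.cast_val_eq_self c⟩

theorem SemiconjBy.diagonal_comp {m R : Type*} [Fintype m] [DecidableEq m] [CommRing R]
    [NoZeroDivisors R] {U : Matrix m m R} {d e : m → R}
    (h : SemiconjBy U (diagonal e) (diagonal d)) (f : R → R) :
    SemiconjBy U (diagonal (f ∘ e)) (diagonal (f ∘ d)) := by
  ext i j
  have hij : U i j * e j = d i * U i j := by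
    simpa only [mul_diagonal, diagonal_mul] using congrFun₂ h.eq i j
  simp only [mul_diagonal, diagonal_mul, Function.comp_apply]
  rcases eq_or_ne (U i j) 0 with h0 | h0
  · simp [h0]
  · rw [mul_comm, mul_left_cancel₀ h0 (hij.trans (mul_comm _ _))]

def chainProd {M : Type*} [Mul M] (x : M) (D : ℕ → M) : ℕ → M
  | 0 => D 0
  | r + 1 => chainProd x D r * x * D (r + 1)

theorem SemiconjBy.chainProd {M : Type*} [Semigroup M] {u x y : M} {D E : ℕ → M}
    (hx : SemiconjBy u x y) (hD : ∀ t, SemiconjBy u (D t) (E t)) (r : ℕ) :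
    SemiconjBy u (chainProd x D r) (chainProd y E r) := by
  induction r with
  | zero => exact hD 0
  | succ r ih => exact (ih.mul_right hx).mul_right (hD (r + 1))

theorem semiconjBy_conjTranspose_mul_mul {m R : Type*} [Fintype m] [DecidableEq m] [Semiring R]
    [Star R] {U : Matrix m m R} (hU : U * Uᴴ = 1) (X : Matrix m m R) : SemiconjBy U (Uᴴ * X * U) X := by
  simp only [SemiconjBy, ← Matrix.mul_assoc, hU, Matrix.one_mul]

section WeightedShift

variable {n : ℕ} [NeZero n]

theorem wcyc_apply (x : Fin n → ℂ) (j : ℕ) : wcyc x j = x ((j : Fin n) - 1) := by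
  have hn : 1 ≤ n := NeZero.one_le
  have h : ((j + n - 1 : ℕ) : Fin n) = (j : Fin n) - 1 := by
    rw [Nat.add_sub_assoc hn, Nat.cast_add, Nat.cast_sub hn, Fin.natCast_self, Nat.cast_one,
      zero_sub, sub_eq_add_neg]
  rw [wcyc, ← h]
  rfl

theorem wsMatrix_apply (a : Fin n → ℂ) (i j : Fin n) :
    wsMatrix a i j = if j = i + 1 then a i else 0 := by
  simp only [wsMatrix, Fin.ext_iff, Fin.val_add, Fin.val_one', Nat.add_mod_mod]

theorem wsMatrix_mul_conjTranspose (a : Fin n → ℂ) :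
    wsMatrix a * (wsMatrix a)ᴴ = diagonal fun i => (‖a i‖ ^ 2 : ℂ) := by
  ext i j
  simp only [mul_apply, conjTranspose_apply, wsMatrix_apply, diagonal_apply]
  rw [Finset.sum_eq_single (i + 1)]
  · rcases eq_or_ne i j with rfl | hij
    · simp [Complex.mul_conj']
    · simp [hij]
  · intro k _ hk
    simp [hk]
  · simp

theorem conjTranspose_wsMatrix_mul (a : Fin n → ℂ) :
    (wsMatrix a)ᴴ * wsMatrix a = diagonal fun i => (‖a (i - 1)‖ ^ 2 : ℂ) := by
  ext i j
  simp only [mul_apply, conjTranspose_apply, wsMatrix_apply, diagonal_apply]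
  rw [Finset.sum_eq_single (i - 1)]
  · simp [Complex.mul_conj', mul_comm, eq_comm]
  · intro k _ hk
    rw [if_neg (fun h => hk (by rw [h, add_sub_cancel_right])), star_zero, zero_mul]
  · simp

theorem chainProd_wsMatrix_apply (x : Fin n → ℂ) (d : ℕ → Fin n → ℂ) (r : ℕ) (i j : Fin n) :
    chainProd (wsMatrix x) (fun t => diagonal (d t)) r i j =
      if j = i + r then (∏ t ∈ Finset.range r, d t (i + t) * x (i + t)) * d r (i + r) else 0 := by
  induction r generalizing j with
  | zero => simp [chainProd, diagonal_apply, eq_comm]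
  | succ r ih =>
    rw [chainProd, mul_diagonal, mul_apply, Finset.sum_eq_single (i + r)]
    · simp only [ih, if_pos, wsMatrix_apply, Nat.cast_succ, ← add_assoc, Finset.prod_range_succ]
      split_ifs with hj
      · rw [hj]; ring
      · simp
    · intro k _ hk
      rw [ih, if_neg hk, zero_mul]
    · simp

noncomputable def windowMatrix (x : Fin n → ℂ) (g : ℕ → ℂ → ℂ) (r : ℕ) :
    Matrix (Fin n) (Fin n) ℂ :=
  diagonal (fun i => g 0 (‖x (i - 1)‖ ^ 2)) *
    chainProd (wsMatrix x) (fun t => diagonal fun i => g (t + 1) (‖x i‖ ^ 2)) r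

theorem windowMatrix_apply (x : Fin n → ℂ) (g : ℕ → ℂ → ℂ) (r : ℕ) (i j : Fin n) :
    windowMatrix x g r i j =
      if j = i + r then
        g 0 (‖x (i - 1)‖ ^ 2) *
          ((∏ t ∈ Finset.range r, g (t + 1) (‖x (i + t)‖ ^ 2) * x (i + t)) *
            g (r + 1) (‖x (i + r)‖ ^ 2))
      else 0 := by
  rw [windowMatrix, diagonal_mul, chainProd_wsMatrix_apply]
  split_ifs <;> simp

theorem SemiconjBy.windowMatrix {U : Matrix (Fin n) (Fin n) ℂ} (hU : U * Uᴴ = 1)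
    {a b : Fin n → ℂ} (h : wsMatrix b = Uᴴ * wsMatrix a * U) (g : ℕ → ℂ → ℂ) (r : ℕ) :
    SemiconjBy U (windowMatrix b g r) (windowMatrix a g r) := by
  have hA : SemiconjBy U (wsMatrix b) (wsMatrix a) := h ▸ semiconjBy_conjTranspose_mul_mul hU _
  have hAH : SemiconjBy U (wsMatrix b)ᴴ (wsMatrix a)ᴴ := by
    simpa only [h, conjTranspose_mul, conjTranspose_conjTranspose, Matrix.mul_assoc] using
      semiconjBy_conjTranspose_mul_mul hU (wsMatrix a)ᴴ
  have hR := hA.mul_right hAH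
  rw [wsMatrix_mul_conjTranspose, wsMatrix_mul_conjTranspose] at hR
  have hL := hAH.mul_right hA
  rw [conjTranspose_wsMatrix_mul, conjTranspose_wsMatrix_mul] at hL
  exact (hL.diagonal_comp (g 0)).mul_right
    (hA.chainProd (fun t => hR.diagonal_comp (g (t + 1))) r)

theorem windowMatrix_ne_zero_iff (x : Fin n → ℂ) (w : ℕ → ℂ) (r : ℕ) :
    windowMatrix x (fun s z => if z = ‖w s‖ ^ 2 then 1 else 0) r ≠ 0 ↔
      ∃ i : Fin n, (∀ s ≤ r + 1, ‖x (i - 1 + s)‖ = ‖w s‖) ∧ ∀ t < r, x (i + t) ≠ 0 := by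
  rw [Ne, ← Matrix.ext_iff]
  simp only [windowMatrix_apply, Nat.forall_le_add_one_iff, Complex.ofReal_norm_sq_eq_iff, ite_mul,
    one_mul, zero_mul, mul_ite, mul_one, mul_zero, Matrix.zero_apply, ite_eq_right_iff,
    Finset.prod_eq_zero_iff, Finset.mem_range, forall_eq, not_forall, not_exists, not_and, imp_and,
    forall_and, Nat.cast_zero, add_zero, Nat.cast_add, Nat.cast_one, sub_add_add_cancel, ne_eq,
    exists_prop]
  tauto

theorem UnitarilyEquiv.exists_norm_window_eq {a b : Fin n → ℂ}
    (h : UnitarilyEquiv (wsMatrix a) (wsMatrix b)) (i : Fin n) (r : ℕ)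
    (ha : ∀ t < r, a (i + t) ≠ 0) :
    ∃ j : Fin n, ∀ s ≤ r + 1, ‖a (i - 1 + s)‖ = ‖b (j - 1 + s)‖ := by
  obtain ⟨U, hU, hB⟩ := h
  have hUU : U * Uᴴ = 1 := mem_unitaryGroup_iff.mp hU
  set g : ℕ → ℂ → ℂ := fun s z => if z = ‖a (i - 1 + s)‖ ^ 2 then 1 else 0
  have hA : windowMatrix a g r ≠ 0 :=
    (windowMatrix_ne_zero_iff a (fun s => a (i - 1 + s)) r).mpr ⟨i, fun _ _ => rfl, ha⟩
  have hB : windowMatrix b g r ≠ 0 := by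
    intro hB0
    have hAU : windowMatrix a g r * U = 0 := by
      rw [← (SemiconjBy.windowMatrix hUU hB g r).eq, hB0, Matrix.mul_zero]
    apply hA
    rw [← Matrix.mul_one (windowMatrix a g r), ← hUU, ← Matrix.mul_assoc, hAU, Matrix.zero_mul]
  obtain ⟨j, hj, -⟩ := (windowMatrix_ne_zero_iff b (fun s => a (i - 1 + s)) r).mp hB
  exact ⟨j, fun s hs => (hj s hs).symm⟩

end WeightedShift

theorem stmt4_general (n : ℕ) [NeZero n] (a b : Fin n → ℂ)
    (h : UnitarilyEquiv (wsMatrix a) (wsMatrix b))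
    (l m : ℕ)
    (hprod : (∏ j ∈ Finset.Icc l m, wcyc a j) ≠ 0) :
    ∃ k : ℕ, 1 ≤ k ∧ k ≤ n ∧ ∀ j : ℕ, l - 1 ≤ j → j ≤ m + 1 →
      ‖wcyc a j‖ = ‖wcyc b (k + j)‖ := by
  have ha : ∀ t < m - (l - 1), a ((l - 1 : ℕ) + t) ≠ 0 := by
    intro t ht
    have hmem : l - 1 + 1 + t ∈ Finset.Icc l m := Finset.mem_Icc.mpr ⟨by omega, by omega⟩
    convert Finset.prod_ne_zero_iff.mp hprod _ hmem using 1
    rw [wcyc_apply]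
    congr 1
    push_cast
    ring
  obtain ⟨i', hi'⟩ := h.exists_norm_window_eq _ (m - (l - 1)) ha
  obtain ⟨k, hk1, hkn, hk⟩ := Fin.exists_one_le_le_natCast_eq (i' - ((l - 1 : ℕ) : Fin n))
  refine ⟨k, hk1, hkn, fun j hj1 hj2 => ?_⟩
  obtain ⟨s, rfl⟩ := Nat.exists_eq_add_of_le hj1
  rw [wcyc_apply, wcyc_apply]
  convert hi' s (by omega) using 3
  · push_cast; ring
  · push_cast [hk]; ring

theorem stmt4 (n : ℕ) [NeZero n] (hn : 3 ≤ n) (a b : Fin n → ℂ)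
    (h : UnitarilyEquiv (wsMatrix a) (wsMatrix b))
    (l m : ℕ) (hl : 1 ≤ l) (hlm : l ≤ m) (hm : m ≤ n)
    (hprod : (∏ j ∈ Finset.Icc l m, wcyc a j) ≠ 0) :
    ∃ k : ℕ, 1 ≤ k ∧ k ≤ n ∧ ∀ j : ℕ, l - 1 ≤ j → j ≤ m + 1 →
      ‖wcyc a j‖ = ‖wcyc b (k + j)‖ :=
  stmt4_general n a b h l m hprod
end

section
/- Let A be an n-by-n weighted shift matrix (n ≥ 3) with nonzero weights a_1, …, a_n, and suppose there exists k with 1 ≤ k ≤ ⌊n/2⌋ such that k divides n and |a_j| = |a_{k+j}| for all 1 ≤ j ≤ n−k. Set m = n/k, ω = e^{2πi/n}, and θ = (Σ_{j=1}^n arg a_j)/n, and let B be the k-by-k weighted shift matrix with weights |a_1|, …, |a_k|. Then A is unitarily equivalent to e^{iθ}·(B ⊕ ωB ⊕ ω²B ⊕ ⋯ ⊕ ω^{m−1}B), the block diagonal matrix with blocks ω^{j}B for j = 0, 1, …, m−1 (after identifying ℂ^n with the direct sum of m copies of ℂ^k). -/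
open Matrix

/-!
Conjugating a weighted shift by a diagonal unitary `diag d` replaces each weight `a_p` by
`a_p d_{p+1} / d_p`, so phases whose product is `1` can be moved off the weights; with `θ` the
mean argument this gives `A ≅ e^{iθ} S`, where `S` has the weights `|a_p|`. These are `k`-periodic,
so for `v_{i,j}(p) = [p ≡ i (mod k)] ω^{jp} / √m` one gets `S v_{i,j} = ω^j |a_{i-1}| v_{i-1,j}`,
which is how `ω^j B` acts on the standard basis of `ℂ^k`. The `v_{i,j}` are orthonormal because
the `ω^{kj}` (`j < m`) are the distinct `m`-th roots of unity.
-/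

namespace UnitarilyEquiv

variable {n : ℕ} {A B C : Matrix (Fin n) (Fin n) ℂ}

lemma trans (h₁ : UnitarilyEquiv A B) (h₂ : UnitarilyEquiv B C) : UnitarilyEquiv A C := by
  obtain ⟨U, hU, rfl⟩ := h₁
  obtain ⟨V, hV, rfl⟩ := h₂
  exact ⟨U * V, mul_mem hU hV, by simp only [conjTranspose_mul, Matrix.mul_assoc]⟩

lemma smul (c : ℂ) (h : UnitarilyEquiv A B) : UnitarilyEquiv (c • A) (c • B) := by
  obtain ⟨U, hU, rfl⟩ := h
  exact ⟨U, hU, by rw [Matrix.mul_smul, Matrix.smul_mul]⟩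

end UnitarilyEquiv

lemma unitarilyEquiv_reindex_of_mul_eq {ι : Type*} [Fintype ι] [DecidableEq ι] {n : ℕ}
    (e : ι ≃ Fin n) {A : Matrix (Fin n) (Fin n) ℂ} {B : Matrix ι ι ℂ} (V : Matrix (Fin n) ι ℂ)
    (hV : Vᴴ * V = 1) (h : A * V = V * B) : UnitarilyEquiv A (reindex e e B) := by
  have hU : (V.submatrix id e.symm)ᴴ * V.submatrix id e.symm = 1 := by
    rw [conjTranspose_submatrix, ← submatrix_mul _ _ _ _ _ Function.bijective_id, hV,
      submatrix_one_equiv]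
  have hAU : A * V.submatrix id e.symm = V.submatrix id e.symm * reindex e e B := by
    rw [reindex_apply, submatrix_mul_equiv, ← h,
      submatrix_mul _ _ _ _ _ Function.bijective_id, submatrix_id_id]
  refine ⟨_, mem_unitaryGroup_iff'.2 hU, ?_⟩
  rw [Matrix.mul_assoc, hAU, ← Matrix.mul_assoc, hU, Matrix.one_mul]

lemma diagonal_mem_unitaryGroup {ι : Type*} [Fintype ι] [DecidableEq ι] {d : ι → ℂ}
    (hd : ∀ p, ‖d p‖ = 1) : diagonal d ∈ unitaryGroup ι ℂ := by
  rw [mem_unitaryGroup_iff', star_eq_conjTranspose, diagonal_conjTranspose, diagonal_mul_diagonal,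
    ← diagonal_one]
  congr 1
  ext p
  simp [Complex.conj_mul', hd p]

lemma mul_blockDiagonal_apply {l m n o α : Type*} [Fintype m] [Fintype o] [DecidableEq o]
    [NonUnitalNonAssocSemiring α] (M : Matrix l (m × o) α) (N : o → Matrix m n α) (p : l)
    (i : n) (j : o) :
    (M * blockDiagonal N) p (i, j) = (M.submatrix id (·, j) * N j) p i := by
  simp only [mul_apply, Fintype.sum_prod_type, blockDiagonal_apply, mul_ite, mul_zero,
    Finset.sum_ite_eq', Finset.mem_univ, if_true, submatrix_apply, id]

lemma val_finRotate {n : ℕ} (i : Fin n) : (finRotate n i : ℕ) = (i + 1) % n := by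
  have := i.neZero
  rw [finRotate_apply, Fin.val_add, Fin.val_one', Nat.add_mod_mod]

lemma Fin.ofNat_finRotate {n k : ℕ} [NeZero k] (hkd : k ∣ n) (p : Fin n) :
    Fin.ofNat k (finRotate n p : ℕ) = finRotate k (Fin.ofNat k p) := by
  ext
  simp only [Fin.val_ofNat, val_finRotate, Nat.mod_mod_of_dvd _ hkd, Nat.mod_add_mod]

lemma Fin.apply_eq_apply_mod {α : Type*} {n k : ℕ} (f : Fin n → α)
    (hf : ∀ i : Fin n, ∀ h : (i : ℕ) + k < n, f i = f ⟨(i : ℕ) + k, h⟩) (p : Fin n)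
    (h : (p : ℕ) % k < n) : f p = f ⟨(p : ℕ) % k, h⟩ := by
  have hstep : ∀ q r (h : r + k * q < n),
      f ⟨r + k * q, h⟩ = f ⟨r, (Nat.le_add_right _ _).trans_lt h⟩ := by
    intro q
    induction q with
    | zero => simp
    | succ q ih =>
      intro r h
      have h' : r + k * q + k < n := by rwa [mul_add_one, ← add_assoc] at h
      rw [← ih r (by omega), hf ⟨r + k * q, by omega⟩ h']
      congr 2
      ring
  calc f p = f ⟨p % k + k * (p / k), by rw [Nat.mod_add_div]; exact p.isLt⟩ :=
        congrArg f (Fin.ext (Nat.mod_add_div _ _).symm)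
    _ = f ⟨p % k, h⟩ := hstep _ _ _

lemma sum_ite_ofNat_eq_pow {R : Type*} [CommSemiring R] {n k m : ℕ} [NeZero k] (hkm : k * m = n)
    (z : R) (i : Fin k) :
    ∑ p : Fin n, (if Fin.ofNat k p = i then z ^ (p : ℕ) else 0) =
      z ^ (i : ℕ) * ∑ t : Fin m, (z ^ k) ^ (t : ℕ) := by
  rw [← (finProdFinEquiv.trans (finCongr ((mul_comm m k).trans hkm))).sum_comp
      (fun p : Fin n => if Fin.ofNat k p = i then z ^ (p : ℕ) else 0),
    Fintype.sum_prod_type, Finset.mul_sum]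
  refine Finset.sum_congr rfl fun t _ => ?_
  have hres : ∀ x : Fin k, Fin.ofNat k ((x : ℕ) + k * (t : ℕ)) = x := fun x => by
    ext
    simp [Nat.mod_eq_of_lt x.isLt]
  simp only [Equiv.trans_apply, finCongr_apply, Fin.val_cast, finProdFinEquiv_apply_val, hres,
    Finset.sum_ite_eq', Finset.mem_univ, if_true, pow_add, pow_mul]

section WeightedShift

variable {n : ℕ}

lemma wsMatrix_apply_eq_ite (a : Fin n → ℂ) (i j : Fin n) :
    wsMatrix a i j = if j = finRotate n i then a i else 0 := by
  simp only [wsMatrix, Fin.ext_iff, val_finRotate]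

lemma wsMatrix_mul_apply {ι : Type*} (a : Fin n → ℂ) (M : Matrix (Fin n) ι ℂ) (i : Fin n)
    (j : ι) : (wsMatrix a * M) i j = a i * M (finRotate n i) j := by
  simp [mul_apply, wsMatrix_apply_eq_ite, ite_mul]

lemma mul_wsMatrix_apply {ι : Type*} (M : Matrix ι (Fin n) ℂ) (a : Fin n → ℂ) (i : ι)
    (j : Fin n) : (M * wsMatrix a) i j = M i ((finRotate n).symm j) * a ((finRotate n).symm j) := by
  simp_rw [mul_apply, wsMatrix_apply_eq_ite, mul_ite, mul_zero, ← Equiv.symm_apply_eq]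
  rw [Finset.sum_ite_eq, if_pos (Finset.mem_univ _)]

lemma wsMatrix_smul (c : ℂ) (a : Fin n → ℂ) : wsMatrix (c • a) = c • wsMatrix a := by
  ext i j
  simp [wsMatrix_apply_eq_ite]

lemma wsMatrix_mul_diagonal {a b d : Fin n → ℂ} (h : ∀ p, a p * d (finRotate n p) = d p * b p) :
    wsMatrix a * diagonal d = diagonal d * wsMatrix b := by
  ext i j
  rw [wsMatrix_mul_apply, diagonal_mul, diagonal_apply, wsMatrix_apply_eq_ite]
  by_cases hj : j = finRotate n i
  · rw [if_pos hj.symm, if_pos hj, h]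
  · rw [if_neg (Ne.symm hj), if_neg hj, mul_zero, mul_zero]

lemma mul_prod_Ici_finRotate {u : Fin n → ℂ} (hu : ∏ p, u p = 1) (p : Fin n) :
    u p * ∏ q ∈ Finset.Ici (finRotate n p), u q = ∏ q ∈ Finset.Ici p, u q := by
  obtain _ | n := n
  · exact p.elim0
  rw [← Finset.mul_prod_Ioi_eq_prod_Ici p]
  congr 1
  by_cases hp : p = Fin.last n
  · subst hp
    rw [Finset.Ioi_eq_empty.2 fun b _ => Fin.le_last b, Finset.prod_empty, ← hu]
    simp
  · refine Finset.prod_congr ?_ fun _ _ => rfl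
    ext q
    simp only [Finset.mem_Ici, Finset.mem_Ioi, Fin.lt_def, Fin.le_def,
      coe_finRotate_of_ne_last hp]
    omega

lemma unitarilyEquiv_wsMatrix_mul_of_prod_eq_one {u : Fin n → ℂ} (hu : ∀ p, ‖u p‖ = 1)
    (hprod : ∏ p, u p = 1) (b : Fin n → ℂ) : UnitarilyEquiv (wsMatrix (u * b)) (wsMatrix b) := by
  have hd : diagonal (fun p => ∏ q ∈ Finset.Ici p, u q) ∈ unitaryGroup (Fin n) ℂ :=
    diagonal_mem_unitaryGroup fun p => by simp [norm_prod, hu]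
  refine ⟨_, hd, ?_⟩
  rw [Matrix.mul_assoc, wsMatrix_mul_diagonal (b := b), ← Matrix.mul_assoc,
    ← star_eq_conjTranspose, mem_unitaryGroup_iff'.1 hd, Matrix.one_mul]
  intro p
  rw [Pi.mul_apply, mul_right_comm, mul_prod_Ici_finRotate hprod]

lemma unitarilyEquiv_wsMatrix_smul_norm (a : Fin n → ℂ) (hn : n ≠ 0) :
    UnitarilyEquiv (wsMatrix a)
      (Complex.exp ((((∑ j, Complex.arg (a j)) / n : ℝ) : ℂ) * Complex.I) •
        wsMatrix fun p => ((‖a p‖ : ℝ) : ℂ)) := by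
  set θ : ℝ := (∑ j, Complex.arg (a j)) / n
  set u : Fin n → ℂ := fun p => Complex.exp ((Complex.arg (a p) - θ : ℝ) * Complex.I)
  have hsplit : a = u * Complex.exp (θ * Complex.I) • fun p => ((‖a p‖ : ℝ) : ℂ) := by
    ext p
    calc a p = ‖a p‖ * Complex.exp (Complex.arg (a p) * Complex.I) :=
          (Complex.norm_mul_exp_arg_mul_I _).symm
      _ = _ := by
          simp only [u, Pi.mul_apply, Pi.smul_apply, smul_eq_mul, Complex.ofReal_sub]
          rw [← mul_assoc, ← Complex.exp_add, mul_comm]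
          ring_nf
  have hprod : ∏ p, u p = 1 := by
    rw [← Complex.exp_sum, ← Finset.sum_mul, ← Complex.ofReal_sum, Finset.sum_sub_distrib,
      Finset.sum_const, Finset.card_univ, Fintype.card_fin, nsmul_eq_mul,
      mul_div_cancel₀ _ (Nat.cast_ne_zero.2 hn), sub_self, Complex.ofReal_zero, zero_mul,
      Complex.exp_zero]
  rw [← wsMatrix_smul]
  conv_lhs => rw [hsplit]
  exact unitarilyEquiv_wsMatrix_mul_of_prod_eq_one (fun p => Complex.norm_exp_ofReal_mul_I _)
    hprod _

end WeightedShift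

noncomputable def residueFourier (n k m : ℕ) [NeZero k] (ω : ℂ) :
    Matrix (Fin n) (Fin k × Fin m) ℂ :=
  of fun p x => if Fin.ofNat k p = x.1 then (ω ^ (x.2 : ℕ)) ^ (p : ℕ) / Real.sqrt m else 0

section ResidueFourier

variable {n k m : ℕ} [NeZero k] {ω : ℂ}

lemma wsMatrix_mul_residueFourier (hkd : k ∣ n) (hω : ω ^ n = 1) {b : Fin n → ℂ}
    {c : Fin k → ℂ} (hb : ∀ p, b p = c (Fin.ofNat k p)) :
    wsMatrix b * residueFourier n k m ω =
      residueFourier n k m ω * blockDiagonal fun j : Fin m => ω ^ (j : ℕ) • wsMatrix c := by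
  ext p ⟨i, j⟩
  rw [wsMatrix_mul_apply, mul_blockDiagonal_apply, Matrix.mul_smul, Matrix.smul_apply, smul_eq_mul,
    mul_wsMatrix_apply]
  simp only [residueFourier, of_apply, submatrix_apply, id, Fin.ofNat_finRotate hkd,
    ← Equiv.eq_symm_apply]
  split_ifs with h
  · have hωj : (ω ^ (j : ℕ)) ^ n = 1 := by rw [← pow_mul, mul_comm, pow_mul, hω, one_pow]
    rw [← h, ← hb, val_finRotate, ← pow_eq_pow_mod _ hωj, pow_succ]
    ring
  · rw [mul_zero, zero_mul, mul_zero]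

lemma star_residueFourier_mul_residueFourier (p : Fin n) (i i' : Fin k) (j j' : Fin m) :
    star (residueFourier n k m ω p (i, j)) * residueFourier n k m ω p (i', j') =
      if i = i' then
        (if Fin.ofNat k p = i then (star (ω ^ (j : ℕ)) * ω ^ (j' : ℕ)) ^ (p : ℕ) else 0) / m
      else 0 := by
  simp only [residueFourier, of_apply]
  by_cases hi : Fin.ofNat k p = i
  · subst hi
    by_cases hi' : Fin.ofNat k p = i'
    · have hsqrt : ((Real.sqrt m : ℝ) : ℂ) * ((Real.sqrt m : ℝ) : ℂ) = m := by
        rw [← Complex.ofReal_mul, Real.mul_self_sqrt (Nat.cast_nonneg m), Complex.ofReal_natCast]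
      rw [if_pos rfl, if_pos hi', if_pos hi', if_pos rfl, star_div₀, Complex.star_def,
        Complex.conj_ofReal, div_mul_div_comm, hsqrt, ← Complex.star_def, star_pow, mul_pow]
    · rw [if_neg hi', if_neg hi', mul_zero]
  · simp only [if_neg hi, star_zero, zero_mul, zero_div, ite_self]

lemma geom_sum_star_pow_mul_pow_eq_zero (hkm : k * m = n) (hω : IsPrimitiveRoot ω n)
    {j j' : Fin m} (hjj : j ≠ j') :
    ∑ t : Fin m, ((star (ω ^ (j : ℕ)) * ω ^ (j' : ℕ)) ^ k) ^ (t : ℕ) = 0 := by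
  have hn : n ≠ 0 := hkm ▸ mul_ne_zero (NeZero.ne k) j.pos.ne'
  have hζ : IsPrimitiveRoot (ω ^ k) m := hω.pow (Nat.pos_of_ne_zero hn) hkm.symm
  have hstar : star (ω ^ (j : ℕ)) = (ω ^ (j : ℕ))⁻¹ := by
    rw [Complex.star_def, ← Complex.inv_eq_conj (by rw [norm_pow, hω.norm'_eq_one hn, one_pow])]
  have hw : (star (ω ^ (j : ℕ)) * ω ^ (j' : ℕ)) ^ k = (ω ^ k) ^ (j' : ℕ) / (ω ^ k) ^ (j : ℕ) := by
    rw [hstar]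
    ring
  have hw1 : (ω ^ k) ^ (j' : ℕ) / (ω ^ k) ^ (j : ℕ) ≠ 1 := by
    rw [Ne, div_eq_one_iff_eq (pow_ne_zero _ (hζ.ne_zero j.pos.ne'))]
    exact fun h => hjj (Fin.ext (hζ.pow_inj j.isLt j'.isLt h.symm))
  have hwm : ((ω ^ k) ^ (j' : ℕ) / (ω ^ k) ^ (j : ℕ)) ^ m = 1 := by
    rw [div_pow, pow_right_comm (ω ^ k) (j' : ℕ) m, pow_right_comm (ω ^ k) (j : ℕ) m,
      hζ.pow_eq_one, one_pow, one_pow, div_one]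
  rw [hw, Fin.sum_univ_eq_sum_range (fun t => _ ^ t), geom_sum_eq hw1, hwm, sub_self, zero_div]

lemma residueFourier_conjTranspose_mul_self (hkm : k * m = n) (hω : IsPrimitiveRoot ω n) :
    (residueFourier n k m ω)ᴴ * residueFourier n k m ω = 1 := by
  ext ⟨i, j⟩ ⟨i', j'⟩
  simp only [mul_apply, conjTranspose_apply, star_residueFourier_mul_residueFourier, one_apply,
    Prod.mk.injEq]
  by_cases hii : i = i'
  · subst hii
    simp only [true_and, if_true, ← Finset.sum_div, sum_ite_ofNat_eq_pow hkm]
    by_cases hjj : j = j'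
    · subst hjj
      have hn : n ≠ 0 := hkm ▸ mul_ne_zero (NeZero.ne k) j.pos.ne'
      have hunit : star (ω ^ (j : ℕ)) * ω ^ (j : ℕ) = 1 := by
        rw [Complex.star_def, Complex.conj_mul', norm_pow, hω.norm'_eq_one hn]
        norm_num
      rw [hunit]
      simp [Nat.cast_ne_zero.2 j.pos.ne']
    · rw [if_neg hjj, geom_sum_star_pow_mul_pow_eq_zero hkm hω hjj, mul_zero, zero_div]
  · rw [if_neg fun h => hii h.1]
    simp only [if_neg hii, Finset.sum_const_zero]

lemma unitarilyEquiv_wsMatrix_reindex_blockDiagonal (e : Fin k × Fin m ≃ Fin n)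
    (hkm : k * m = n) (hω : IsPrimitiveRoot ω n) {b : Fin n → ℂ} {c : Fin k → ℂ}
    (hb : ∀ p, b p = c (Fin.ofNat k p)) :
    UnitarilyEquiv (wsMatrix b)
      (reindex e e (blockDiagonal fun j : Fin m => ω ^ (j : ℕ) • wsMatrix c)) :=
  unitarilyEquiv_reindex_of_mul_eq e _ (residueFourier_conjTranspose_mul_self hkm hω)
    (wsMatrix_mul_residueFourier (Dvd.intro m hkm) hω.pow_eq_one hb)

end ResidueFourier

theorem stmt11_general (n k : ℕ) (a : Fin n → ℂ)
    (hk1 : 1 ≤ k) (hk2 : k ≤ n / 2) (hkd : k ∣ n)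
    (hper : ∀ i : Fin n, ∀ h : (i : ℕ) + k < n,
      ‖a i‖ = ‖a ⟨(i : ℕ) + k, h⟩‖) :
    UnitarilyEquiv (wsMatrix a)
      (Complex.exp ((((∑ j, Complex.arg (a j)) / n : ℝ) : ℂ) * Complex.I) •
        (Matrix.reindex (finProdFinEquiv.trans (finCongr (Nat.mul_div_cancel' hkd)))
            (finProdFinEquiv.trans (finCongr (Nat.mul_div_cancel' hkd)))
          (Matrix.blockDiagonal fun j : Fin (n / k) =>
            Complex.exp (2 * Real.pi * Complex.I / n) ^ (j : ℕ) •
              wsMatrix fun i : Fin k =>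
                ((‖a (Fin.castLE (le_trans hk2 (Nat.div_le_self n 2)) i)‖ : ℝ) : ℂ)))) := by
  have hn : n ≠ 0 := by omega
  have : NeZero k := ⟨by omega⟩
  refine (unitarilyEquiv_wsMatrix_smul_norm a hn).trans (.smul _ ?_)
  refine unitarilyEquiv_wsMatrix_reindex_blockDiagonal _ (Nat.mul_div_cancel' hkd)
    (Complex.isPrimitiveRoot_exp n hn) fun p => ?_
  have hp : (p : ℕ) % k < n := (Nat.mod_lt _ (by omega)).trans_le (hk2.trans (Nat.div_le_self n 2))
  exact congrArg _ (Fin.apply_eq_apply_mod (fun i => ‖a i‖) hper p hp)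

theorem stmt11 (n k : ℕ) (hn : 3 ≤ n) (a : Fin n → ℂ) (ha : ∀ i, a i ≠ 0)
    (hk1 : 1 ≤ k) (hk2 : k ≤ n / 2) (hkd : k ∣ n)
    (hper : ∀ i : Fin n, ∀ h : (i : ℕ) + k < n,
      ‖a i‖ = ‖a ⟨(i : ℕ) + k, h⟩‖) :
    UnitarilyEquiv (wsMatrix a)
      (Complex.exp ((((∑ j, Complex.arg (a j)) / n : ℝ) : ℂ) * Complex.I) •
        (Matrix.reindex (finProdFinEquiv.trans (finCongr (Nat.mul_div_cancel' hkd)))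
            (finProdFinEquiv.trans (finCongr (Nat.mul_div_cancel' hkd)))
          (Matrix.blockDiagonal fun j : Fin (n / k) =>
            Complex.exp (2 * Real.pi * Complex.I / n) ^ (j : ℕ) •
              wsMatrix fun i : Fin k =>
                ((‖a (Fin.castLE (le_trans hk2 (Nat.div_le_self n 2)) i)‖ : ℝ) : ℂ)))) :=
  stmt11_general n k a hk1 hk2 hkd hper
end
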